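/- arXiv:2301.01966 — 2 statements merged into one kernel-verified Lean document; each statement's English description precedes it below -/
import Mathlib

section
/- Let ((Q_k, M_k))_{k ≥ 1} be an i.i.d. sequence of pairs of real random variables with M_k > 0 almost surely, and let p ∈ (0, 1] be such that E[M_1^p] < 1 and E[|Q_1|^p] < ∞. Then the series ∑_{k=1}^∞ A_{k−1} Q_k, where A_0 := 1 and A_n := M_1 M_2 ⋯ M_n for n ≥ 1, converges almost surely to a finite random variable. -/
open MeasureTheory ProbabilityTheory Filter Finset
open scoped ENNReal

/-! Taking `p`-th moments termwise, independence and identical distribution give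
`E ∑ₙ |A_{n-1} Q_n|^p = E|Q_1|^p ∑ₙ (E M_1^p)^(n-1) < ∞`, so `∑ₙ |A_{n-1} Q_n|^p` is finite almost
surely. Since `p ≤ 1`, `|x| ≤ |x|^p` as soon as `|x|^p ≤ 1`, which holds for all but finitely many
terms, so the series converges absolutely. -/

theorem Summable.of_norm_rpow {ι E : Type*} [NormedAddCommGroup E] [CompleteSpace E]
    {u : ι → E} {p : ℝ} (hp0 : 0 < p) (hp1 : p ≤ 1) (h : Summable fun i => ‖u i‖ ^ p) :
    Summable u := by
  refine Summable.of_norm_bounded_eventually h ?_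
  filter_upwards [h.tendsto_cofinite_zero.eventually_le_const zero_lt_one] with i hi
  have hle : ‖u i‖ ≤ 1 := by
    by_contra! hgt
    exact (Real.one_lt_rpow hgt hp0).not_ge hi
  exact Real.self_le_rpow_of_le_one (norm_nonneg _) hle hp1

theorem Summable.of_tsum_enorm_rpow_ne_top {ι E : Type*} [NormedAddCommGroup E] [CompleteSpace E]
    {u : ι → E} {p : ℝ} (hp0 : 0 < p) (hp1 : p ≤ 1) (h : ∑' i, ‖u i‖ₑ ^ p ≠ ∞) :
    Summable u := by
  simp_rw [enorm_eq_nnnorm, ← ENNReal.coe_rpow_of_nonneg _ hp0.le] at h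
  refine .of_norm_rpow hp0 hp1 ?_
  simpa [← NNReal.summable_coe] using ENNReal.tsum_coe_ne_top_iff_summable.mp h

theorem enorm_prod_mul_rpow {ι 𝕜 : Type*} [NormedCommRing 𝕜] [NormMulClass 𝕜]
    [NormOneClass 𝕜] (s : Finset ι) (a : ι → 𝕜) (b : 𝕜) {p : ℝ} (hp : 0 ≤ p) :
    ‖(∏ i ∈ s, a i) * b‖ₑ ^ p = (∏ i ∈ s, ‖a i‖ₑ ^ p) * ‖b‖ₑ ^ p := by
  rw [enorm_mul, ENNReal.mul_rpow_of_nonneg _ _ hp, ENNReal.prod_rpow_of_nonneg hp]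
  simp [enorm_eq_nnnorm]

section

variable {Ω β : Type*} [MeasurableSpace Ω] [MeasurableSpace β] {μ : Measure Ω}

theorem lintegral_enorm_rpow_eq_ofReal_integral {f : Ω → ℝ} {p : ℝ} (hp : 0 ≤ p)
    (hf : Integrable (fun ω => |f ω| ^ p) μ) :
    ∫⁻ ω, ‖f ω‖ₑ ^ p ∂μ = ENNReal.ofReal (∫ ω, |f ω| ^ p ∂μ) := by
  rw [ofReal_integral_eq_lintegral_ofReal hf (ae_of_all _ fun ω => by positivity)]
  congr with ω
  rw [Real.enorm_eq_ofReal_abs, ENNReal.ofReal_rpow_of_nonneg (abs_nonneg _) hp]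

theorem lintegral_comp_eq_of_map_eq {X Y : Ω → β} (hX : Measurable X) (hY : Measurable Y)
    (h : μ.map X = μ.map Y) {f : β → ℝ≥0∞} (hf : Measurable f) :
    ∫⁻ ω, f (X ω) ∂μ = ∫⁻ ω, f (Y ω) ∂μ :=
  (IdentDistrib.comp ⟨hX.aemeasurable, hY.aemeasurable, h⟩ hf).lintegral_eq

theorem lintegral_prod_range_mul_of_iid {Z : ℕ → Ω → β} (hmeas : ∀ k, Measurable (Z k))
    (hindep : iIndepFun Z μ) (hident : ∀ k, μ.map (Z k) = μ.map (Z 0)) {g h : β → ℝ≥0∞}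
    (hg : Measurable g) (hh : Measurable h) (n : ℕ) :
    ∫⁻ ω, (∏ i ∈ range n, g (Z i ω)) * h (Z n ω) ∂μ =
      (∫⁻ ω, g (Z 0 ω) ∂μ) ^ n * ∫⁻ ω, h (Z 0 ω) ∂μ := by
  -- one independent family `φ i ∘ Z i` whose product over `range (n + 1)` is the integrand
  set φ : ℕ → β → ℝ≥0∞ := fun i => if i = n then h else g
  have hφ : ∀ i, Measurable (φ i) := fun i => by dsimp only [φ]; split_ifs <;> assumption
  have hφ_lt : ∀ i ∈ range n, φ i = g := fun i hi => if_neg (mem_range.mp hi).ne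
  calc ∫⁻ ω, (∏ i ∈ range n, g (Z i ω)) * h (Z n ω) ∂μ
      = ∫⁻ ω, ∏ i ∈ range (n + 1), φ i (Z i ω) ∂μ := by
        simp_rw [prod_range_succ, prod_congr rfl fun i hi => congrFun (hφ_lt i hi) _]
        simp [φ]
    _ = ∏ i ∈ range (n + 1), ∫⁻ ω, φ i (Z i ω) ∂μ :=
        lintegral_prod_eq_prod_lintegral_of_indepFun _ _ (hindep.comp φ hφ)
          fun i => (hφ i).comp (hmeas i)
    _ = ∏ i ∈ range (n + 1), ∫⁻ ω, φ i (Z 0 ω) ∂μ :=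
        prod_congr rfl fun i _ => lintegral_comp_eq_of_map_eq (hmeas i) (hmeas 0) (hident i) (hφ i)
    _ = (∫⁻ ω, g (Z 0 ω) ∂μ) ^ n * ∫⁻ ω, h (Z 0 ω) ∂μ := by
        rw [prod_range_succ, prod_congr rfl fun i hi => by rw [hφ_lt i hi], prod_const, card_range]
        simp [φ]

end

theorem perpetuity_series_converges_ae_general
    {Ω : Type*} [MeasureSpace Ω]
    (ZM : ℕ → Ω → ℝ × ℝ) (hmeas : ∀ k, Measurable (ZM k))
    (hiid_indep : iIndepFun ZM ℙ)
    (hiid_ident : ∀ k, Measure.map (ZM k) ℙ = Measure.map (ZM 0) ℙ)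
    (hMpos : ∀ k, ∀ᵐ ω ∂ℙ, 0 < (ZM k ω).2)
    (p : ℝ) (hp0 : 0 < p) (hp1 : p ≤ 1)
    (hMp_int : Integrable (fun ω => (ZM 0 ω).2 ^ p) ℙ)
    (hMp : ∫ ω, (ZM 0 ω).2 ^ p ∂ℙ < 1)
    (hQp : Integrable (fun ω => |(ZM 0 ω).1| ^ p) ℙ) :
    ∀ᵐ ω ∂ℙ, ∃ L : ℝ, Tendsto
      (fun n => ∑ k ∈ Finset.range n,
        (∏ i ∈ Finset.range k, (ZM i ω).2) * (ZM k ω).1) atTop (nhds L) := by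
  have habsM : (fun ω => |(ZM 0 ω).2| ^ p) =ᵐ[ℙ] fun ω => (ZM 0 ω).2 ^ p := by
    filter_upwards [hMpos 0] with ω hω using by rw [abs_of_pos hω]
  have hM : ∫⁻ ω, ‖(ZM 0 ω).2‖ₑ ^ p < 1 := by
    rw [lintegral_enorm_rpow_eq_ofReal_integral hp0.le (hMp_int.congr habsM.symm),
      integral_congr_ae habsM]
    exact ENNReal.ofReal_lt_one.mpr hMp
  have hQ : ∫⁻ ω, ‖(ZM 0 ω).1‖ₑ ^ p ≠ ∞ := by
    rw [lintegral_enorm_rpow_eq_ofReal_integral hp0.le hQp]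
    exact ENNReal.ofReal_ne_top
  have hmoment : ∫⁻ ω, ∑' n, ‖(∏ i ∈ range n, (ZM i ω).2) * (ZM n ω).1‖ₑ ^ p ≠ ∞ := by
    rw [lintegral_tsum fun n => by fun_prop]
    simp_rw [enorm_prod_mul_rpow _ _ _ hp0.le,
      lintegral_prod_range_mul_of_iid hmeas hiid_indep hiid_ident (g := fun x => ‖x.2‖ₑ ^ p)
        (h := fun x => ‖x.1‖ₑ ^ p) (by fun_prop) (by fun_prop),
      ENNReal.tsum_mul_right, ENNReal.tsum_geometric]
    exact ENNReal.mul_ne_top (ENNReal.inv_ne_top.mpr (tsub_pos_of_lt hM).ne') hQ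
  filter_upwards [ae_lt_top' (by fun_prop) hmoment] with ω hω
  exact ⟨_, (Summable.of_tsum_enorm_rpow_ne_top hp0 hp1 hω.ne).hasSum.tendsto_sum_nat⟩

/-- Almost sure convergence of the perpetuity series `∑ A_{k-1} Q_k` (with
`A_n = M_1 ⋯ M_n`, here 0-indexed: pair number `k ≥ 1` is `ZM (k-1)`) when
`E[M_1^p] < 1` and `E[|Q_1|^p] < ∞` for some `p ∈ (0, 1]`. -/
theorem perpetuity_series_converges_ae
    {Ω : Type*} [MeasureSpace Ω] [IsProbabilityMeasure (ℙ : Measure Ω)]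
    (ZM : ℕ → Ω → ℝ × ℝ) (hmeas : ∀ k, Measurable (ZM k))
    (hiid_indep : iIndepFun ZM ℙ)
    (hiid_ident : ∀ k, Measure.map (ZM k) ℙ = Measure.map (ZM 0) ℙ)
    (hMpos : ∀ k, ∀ᵐ ω ∂ℙ, 0 < (ZM k ω).2)
    (p : ℝ) (hp0 : 0 < p) (hp1 : p ≤ 1)
    (hMp_int : Integrable (fun ω => (ZM 0 ω).2 ^ p) ℙ)
    (hMp : ∫ ω, (ZM 0 ω).2 ^ p ∂ℙ < 1)
    (hQp : Integrable (fun ω => |(ZM 0 ω).1| ^ p) ℙ) :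
    ∀ᵐ ω ∂ℙ, ∃ L : ℝ, Tendsto
      (fun n => ∑ k ∈ Finset.range n,
        (∏ i ∈ Finset.range k, (ZM i ω).2) * (ZM k ω).1) atTop (nhds L) :=
  perpetuity_series_converges_ae_general ZM hmeas hiid_indep hiid_ident hMpos p hp0 hp1 hMp_int hMp
    hQp
end

section
/- Let ((Q_k, M_k))_{k ≥ 1} be an i.i.d. sequence of pairs of real random variables with M_k > 0 almost surely, put A_0 := 1 and A_n := M_1 ⋯ M_n for n ≥ 1, and suppose that the series Y := ∑_{k=1}^∞ A_{k−1} Q_k converges almost surely to a finite random variable. If there exists n ≥ 1 such that both the random variable Q_1 and the random variable (Q_1 + M_1 Q_2 + ⋯ + A_{n−1} Q_n)/A_n are unbounded from above, then Y is unbounded from above. -/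
/-!
Suppose `Y` is almost surely bounded above and let `s` be its essential supremum. Cutting the series
after `m` terms gives `Y = S_m + A_m Y'`, where `Y'` is the perpetuity of the shifted sequence: it
has the law of `Y` and is independent of `(S_m, A_m)`. Conditioning on `(S_m, A_m)` (Fubini) yields
`S_m + A_m s ≤ s` almost surely. For `s ≥ 0` and `m = 1` this bounds `Q_1` by `s`; for `s < 0` and
`m = n` it bounds `S_n / A_n` by `-s`.
-/

open MeasureTheory ProbabilityTheory Filter Finset Topology

theorem Filter.isCoboundedUnder_le_of_countableInterFilter {ι : Type*} {l : Filter ι}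
    [CountableInterFilter l] [NeBot l] (f : ι → ℝ) : IsCoboundedUnder (· ≤ ·) l f := by
  by_contra h
  simp only [IsCoboundedUnder, IsCobounded, eventually_map, not_exists, not_forall,
    exists_prop, not_le] at h
  have hbelow : ∀ n : ℕ, ∀ᶠ i in l, f i < -n := fun n ↦ by
    obtain ⟨a, ha, han⟩ := h (-n)
    exact ha.mono fun i hi ↦ hi.trans_lt han
  obtain ⟨i, hi⟩ := (eventually_countable_forall.2 hbelow).exists
  obtain ⟨n, hn⟩ := exists_nat_gt (-f i)
  linarith [hi n]

section

variable {Ω α β : Type*} [MeasurableSpace Ω] [MeasurableSpace α] [MeasurableSpace β]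
  {μ : Measure Ω}

theorem ProbabilityTheory.IndepFun.ae_measure_preimage_prodMk_eq_zero [IsFiniteMeasure μ]
    {X : Ω → α} {Z : Ω → β} (hX : Measurable X) (hZ : Measurable Z) (hXZ : IndepFun X Z μ)
    {E : Set (α × β)} (hE : MeasurableSet E) (h : μ ((fun ω ↦ (X ω, Z ω)) ⁻¹' E) = 0) :
    ∀ᵐ ω ∂μ, μ ((fun ω' ↦ (X ω, Z ω')) ⁻¹' E) = 0 := by
  have hprod : (μ.map X).prod (μ.map Z) E = 0 := by
    rwa [← hXZ.map_prod_eq_prod_map_map hX.aemeasurable hZ.aemeasurable,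
      Measure.map_apply (hX.prodMk hZ) hE]
  filter_upwards [ae_of_ae_map hX.aemeasurable ((Measure.measure_prod_null hE).1 hprod)]
    with ω hω
  rwa [Measure.map_apply hZ (measurable_prodMk_left hE)] at hω

theorem ProbabilityTheory.iIndepFun.indepFun_of_measurable_biSup {ι γ δ : Type*}
    [MeasurableSpace γ] [MeasurableSpace δ] {X : ι → Ω → β} (hX : ∀ i, Measurable (X i))
    (h : iIndepFun X μ) {S T : Set ι} (hST : Disjoint S T) {f : Ω → γ} {g : Ω → δ}
    (hf : Measurable[⨆ i ∈ S, MeasurableSpace.comap (X i) ‹_›] f)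
    (hg : Measurable[⨆ i ∈ T, MeasurableSpace.comap (X i) ‹_›] g) :
    IndepFun f g μ :=
  (IndepFun_iff_Indep f g μ).2 <| indep_of_indep_of_le_right
    (indep_of_indep_of_le_left (indep_iSup_of_disjoint (fun i ↦ (hX i).comap_le) h hST)
      hf.comap_le) hg.comap_le

theorem ProbabilityTheory.iIndepFun.map_comp_eq_map {ι : Type*} {X : ι → Ω → β}
    (hX : ∀ i, Measurable (X i)) (h : iIndepFun X μ) {ν : Measure β}
    (hν : ∀ i, μ.map (X i) = ν) {g : ι → ι} (hg : g.Injective) :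
    μ.map (fun ω i ↦ X (g i) ω) = μ.map (fun ω i ↦ X i ω) := by
  rw [(h.precomp hg).map_fun_eq_infinitePi_map fun i ↦ hX (g i),
    h.map_fun_eq_infinitePi_map hX]
  simp only [hν]

theorem ae_add_mul_essSup_le [IsProbabilityMeasure μ] {B A V Y : Ω → ℝ} (hB : Measurable B)
    (hA : Measurable A) (hV : Measurable V) (hindep : IndepFun (fun ω ↦ (B ω, A ω)) V μ)
    (hVY : IdentDistrib V Y μ μ) (hApos : ∀ᵐ ω ∂μ, 0 < A ω)
    (hY : Y =ᵐ[μ] fun ω ↦ B ω + A ω * V ω) (hbdd : IsBoundedUnder (· ≤ ·) (ae μ) Y) :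
    ∀ᵐ ω ∂μ, B ω + A ω * essSup Y μ ≤ essSup Y μ := by
  set s := essSup Y μ
  have hco := isCoboundedUnder_le_of_countableInterFilter (l := ae μ) Y
  have hE : MeasurableSet {p : (ℝ × ℝ) × ℝ | s < p.1.1 + p.1.2 * p.2} := by
    apply measurableSet_lt <;> fun_prop
  have hnull : μ {ω | s < B ω + A ω * V ω} = 0 := by
    refine measure_eq_zero_iff_ae_notMem.2 ?_
    filter_upwards [hY, ae_le_essSup hbdd] with ω hYω hYs
    exact not_lt.2 (hYω ▸ hYs)
  filter_upwards [hindep.ae_measure_preimage_prodMk_eq_zero (hB.prodMk hA) hV hE hnull, hApos]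
    with ω hω hAω
  have hYle : ∀ᵐ ω' ∂μ, Y ω' ≤ (s - B ω) / A ω := by
    have hYnull : μ (V ⁻¹' {v | s < B ω + A ω * v}) = 0 := hω
    rw [hVY.measure_mem_eq (measurableSet_lt (by fun_prop) (by fun_prop))] at hYnull
    filter_upwards [measure_eq_zero_iff_ae_notMem.1 hYnull] with ω' hω'
    rw [le_div_iff₀ hAω]
    simp only [Set.mem_preimage, Set.mem_ofPred_eq, not_lt] at hω'
    linarith
  have := essSup_le_of_ae_le _ hYle hco
  rw [le_div_iff₀ hAω] at this
  linarith

end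

namespace Perpetuity

def partialSum (x : ℕ → ℝ × ℝ) (n : ℕ) : ℝ :=
  ∑ k ∈ range n, (∏ i ∈ range k, (x i).2) * (x k).1

def partialProd (x : ℕ → ℝ × ℝ) (n : ℕ) : ℝ :=
  ∏ i ∈ range n, (x i).2

/-- The sum of the perpetuity series, taken as a `limsup` so that it is a measurable function of
the whole sequence; it is the sum wherever the series converges. -/
noncomputable def value (x : ℕ → ℝ × ℝ) : ℝ :=
  limsup (partialSum x) atTop

theorem value_eq_of_tendsto {x : ℕ → ℝ × ℝ} {L : ℝ} (h : Tendsto (partialSum x) atTop (𝓝 L)) :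
    value x = L :=
  h.limsup_eq

theorem partialSum_add (x : ℕ → ℝ × ℝ) (m j : ℕ) :
    partialSum x (m + j) = partialSum x m + partialProd x m * partialSum (fun k ↦ x (m + k)) j := by
  simp only [partialSum, partialProd, sum_range_add, mul_sum, prod_range_add, mul_assoc]

theorem eq_partialSum_add_mul_value_shift {x : ℕ → ℝ × ℝ} {L : ℝ}
    (h : Tendsto (partialSum x) atTop (𝓝 L)) {m : ℕ} (hm : partialProd x m ≠ 0) :
    L = partialSum x m + partialProd x m * value (fun k ↦ x (m + k)) := by
  have hshift : Tendsto (partialSum fun k ↦ x (m + k)) atTop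
      (𝓝 ((L - partialSum x m) / partialProd x m)) := by
    have := ((h.comp (tendsto_add_atTop_nat m)).sub_const (partialSum x m)).div_const
      (partialProd x m)
    refine this.congr fun j ↦ ?_
    simp only [Function.comp_apply, add_comm j m, partialSum_add]
    field_simp
    ring
  rw [value_eq_of_tendsto hshift]
  field_simp
  ring

section Measurability

variable {Ω : Type*} {mΩ : MeasurableSpace Ω} {x : Ω → ℕ → ℝ × ℝ} {n : ℕ}

theorem measurable_partialSum (hx : ∀ i < n, Measurable fun ω ↦ x ω i) :
    Measurable fun ω ↦ partialSum (x ω) n :=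
  Finset.measurable_sum _ fun k hk ↦ (Finset.measurable_prod _ fun i hi ↦
    (hx i ((mem_range.1 hi).trans (mem_range.1 hk))).snd).mul (hx k (mem_range.1 hk)).fst

theorem measurable_partialProd (hx : ∀ i < n, Measurable fun ω ↦ x ω i) :
    Measurable fun ω ↦ partialProd (x ω) n :=
  Finset.measurable_prod _ fun i hi ↦ (hx i (mem_range.1 hi)).snd

end Measurability

theorem measurable_value : Measurable value :=
  Measurable.limsup fun _ ↦ measurable_partialSum (x := id) fun i _ ↦ measurable_pi_apply i

section IID

variable {Ω : Type*} [MeasurableSpace Ω] {μ : Measure Ω} {X : ℕ → Ω → ℝ × ℝ}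

theorem indepFun_prefix_value_shift (hX : ∀ k, Measurable (X k)) (hind : iIndepFun X μ)
    (m : ℕ) :
    IndepFun (fun ω ↦ (partialSum (fun k ↦ X k ω) m, partialProd (fun k ↦ X k ω) m))
      (fun ω ↦ value fun k ↦ X (m + k) ω) μ := by
  have hle {S : Set ℕ} {i : ℕ} (hi : i ∈ S) :
      Measurable[⨆ j ∈ S, MeasurableSpace.comap (X j) inferInstance] (X i) :=
    Measurable.of_comap_le (le_biSup (fun j ↦ MeasurableSpace.comap (X j) inferInstance) hi)
  refine hind.indepFun_of_measurable_biSup hX (Set.Iio_disjoint_Ici (le_refl m)) ?_ ?_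
  · exact (measurable_partialSum fun i hi ↦ hle hi).prodMk
      (measurable_partialProd fun i hi ↦ hle hi)
  -- The σ-algebra on `Ω` here is not the instance, so `measurable_pi_lambda` needs it explicitly.
  · exact measurable_value.comp <| @measurable_pi_lambda _ _ _ (_) _ _ fun k ↦
      hle (Set.mem_Ici.2 (Nat.le_add_right m k))

theorem identDistrib_value_shift (hX : ∀ k, Measurable (X k)) (hind : iIndepFun X μ)
    (hident : ∀ k, μ.map (X k) = μ.map (X 0)) {Y : Ω → ℝ}
    (hconv : ∀ᵐ ω ∂μ, Tendsto (partialSum fun k ↦ X k ω) atTop (𝓝 (Y ω))) (m : ℕ) :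
    IdentDistrib (fun ω ↦ value fun k ↦ X (m + k) ω) Y μ μ := by
  have hseq : Measurable fun ω k ↦ X k ω := measurable_pi_lambda _ hX
  have hshift : IdentDistrib (fun ω k ↦ X (m + k) ω) (fun ω k ↦ X k ω) μ μ :=
    ⟨(measurable_pi_lambda _ fun k ↦ hX (m + k)).aemeasurable, hseq.aemeasurable,
      hind.map_comp_eq_map hX hident (add_right_injective m)⟩
  exact (hshift.comp measurable_value).trans <| IdentDistrib.of_ae_eq
    (measurable_value.comp hseq).aemeasurable (hconv.mono fun _ ↦ value_eq_of_tendsto)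

theorem ae_partialSum_add_mul_essSup_le [IsProbabilityMeasure μ] (hX : ∀ k, Measurable (X k))
    (hind : iIndepFun X μ) (hident : ∀ k, μ.map (X k) = μ.map (X 0))
    (hpos : ∀ k, ∀ᵐ ω ∂μ, 0 < (X k ω).2) {Y : Ω → ℝ}
    (hconv : ∀ᵐ ω ∂μ, Tendsto (partialSum fun k ↦ X k ω) atTop (𝓝 (Y ω)))
    (hbdd : IsBoundedUnder (· ≤ ·) (ae μ) Y) (m : ℕ) :
    ∀ᵐ ω ∂μ, partialSum (fun k ↦ X k ω) m + partialProd (fun k ↦ X k ω) m * essSup Y μ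
      ≤ essSup Y μ := by
  have hprod : ∀ᵐ ω ∂μ, 0 < partialProd (fun k ↦ X k ω) m :=
    (ae_all_iff.2 hpos).mono fun _ hω ↦ prod_pos fun i _ ↦ hω i
  refine ae_add_mul_essSup_le (measurable_partialSum fun i _ ↦ hX i)
    (measurable_partialProd fun i _ ↦ hX i)
    (measurable_value.comp (measurable_pi_lambda _ fun k ↦ hX (m + k)))
    (indepFun_prefix_value_shift hX hind m) (identDistrib_value_shift hX hind hident hconv m)
    hprod ?_ hbdd
  filter_upwards [hconv, hprod] with ω hω hA using eq_partialSum_add_mul_value_shift hω hA.ne'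

end IID

end Perpetuity

open Perpetuity

theorem perpetuity_unbounded_above_general
    {Ω : Type*} [MeasureSpace Ω] [IsProbabilityMeasure (ℙ : Measure Ω)]
    (ZM : ℕ → Ω → ℝ × ℝ) (hmeas : ∀ k, Measurable (ZM k))
    (hiid_indep : iIndepFun ZM ℙ)
    (hiid_ident : ∀ k, Measure.map (ZM k) ℙ = Measure.map (ZM 0) ℙ)
    (hMpos : ∀ k, ∀ᵐ ω ∂ℙ, 0 < (ZM k ω).2)
    (Y : Ω → ℝ)
    (hconv : ∀ᵐ ω ∂ℙ, Tendsto
      (fun n => ∑ k ∈ Finset.range n,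
        (∏ i ∈ Finset.range k, (ZM i ω).2) * (ZM k ω).1) atTop (nhds (Y ω)))
    (hn : ∃ n : ℕ, 1 ≤ n ∧
      (∀ c : ℝ, 0 < ℙ {ω | (ZM 0 ω).1 > c}) ∧
      (∀ c : ℝ, 0 < ℙ {ω | (∑ k ∈ Finset.range n,
          (∏ i ∈ Finset.range k, (ZM i ω).2) * (ZM k ω).1) /
          (∏ i ∈ Finset.range n, (ZM i ω).2) > c})) :
    ∀ c : ℝ, 0 < ℙ {ω | Y ω > c} := by
  obtain ⟨n, -, hQ, hR⟩ := hn
  by_contra! ⟨c, hc⟩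
  have hbdd : IsBoundedUnder (· ≤ ·) (ae ℙ) Y := isBoundedUnder_of_eventually_le (a := c) <|
    (measure_eq_zero_iff_ae_notMem.1 (nonpos_iff_eq_zero.1 hc)).mono fun _ h ↦ not_lt.1 h
  have key := ae_partialSum_add_mul_essSup_le hmeas hiid_indep hiid_ident hMpos hconv hbdd
  have hM := ae_all_iff.2 hMpos
  rcases le_or_gt 0 (essSup Y ℙ) with hs | hs
  · refine (hQ (essSup Y ℙ)).ne' (measure_eq_zero_iff_ae_notMem.2 ?_)
    filter_upwards [key 1, hM] with ω hω hMω
    simp only [partialSum, partialProd, sum_range_one, prod_range_one, prod_range_zero,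
      one_mul] at hω
    simp only [not_lt]
    linarith [mul_nonneg (hMω 0).le hs]
  · refine (hR (-essSup Y ℙ)).ne' (measure_eq_zero_iff_ae_notMem.2 ?_)
    filter_upwards [key n, hM] with ω hω hMω
    have hA : 0 < partialProd (fun k ↦ ZM k ω) n := prod_pos fun i _ ↦ hMω i
    change ¬(_ < partialSum (fun k ↦ ZM k ω) n / partialProd (fun k ↦ ZM k ω) n)
    rw [not_lt, div_le_iff₀ hA]
    linarith

/-- Sufficient condition for unboundedness from above of the perpetuity
`Y = ∑_{k ≥ 1} A_{k-1} Q_k` (0-indexed: pair number `k ≥ 1` is `ZM (k-1)`,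
`A_n = ∏_{i < n} M_i`): if for some `n ≥ 1` both `Q_1` and
`(Q_1 + M_1 Q_2 + ⋯ + A_{n-1} Q_n)/A_n` are unbounded from above, then so is `Y`. -/
theorem perpetuity_unbounded_above
    {Ω : Type*} [MeasureSpace Ω] [IsProbabilityMeasure (ℙ : Measure Ω)]
    (ZM : ℕ → Ω → ℝ × ℝ) (hmeas : ∀ k, Measurable (ZM k))
    (hiid_indep : iIndepFun ZM ℙ)
    (hiid_ident : ∀ k, Measure.map (ZM k) ℙ = Measure.map (ZM 0) ℙ)
    (hMpos : ∀ k, ∀ᵐ ω ∂ℙ, 0 < (ZM k ω).2)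
    (Y : Ω → ℝ) (hYmeas : Measurable Y)
    (hconv : ∀ᵐ ω ∂ℙ, Tendsto
      (fun n => ∑ k ∈ Finset.range n,
        (∏ i ∈ Finset.range k, (ZM i ω).2) * (ZM k ω).1) atTop (nhds (Y ω)))
    (hn : ∃ n : ℕ, 1 ≤ n ∧
      (∀ c : ℝ, 0 < ℙ {ω | (ZM 0 ω).1 > c}) ∧
      (∀ c : ℝ, 0 < ℙ {ω | (∑ k ∈ Finset.range n,
          (∏ i ∈ Finset.range k, (ZM i ω).2) * (ZM k ω).1) /
          (∏ i ∈ Finset.range n, (ZM i ω).2) > c})) :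
    ∀ c : ℝ, 0 < ℙ {ω | Y ω > c} :=
  perpetuity_unbounded_above_general ZM hmeas hiid_indep hiid_ident hMpos Y hconv hn
end
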